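/- As formal power series in two variables x₁, x₂ with a parameter x₃, one has 1/((1-x₁)(1-x₂)) + ∑_{n≥1} ∑_{k≥n} ∑_{l≥n} C(k,n) C(l,n) x₁^k x₂^l x₃^n = 1/((1-x₁)(1-x₂) - x₁x₂x₃). -/

import Mathlib

/-!
Let `F = ∑_{k,l,n} C(k,n) C(l,n) x₁^k x₂^l x₃^n`. Multiplying by `(1 - x₁)(1 - x₂)` takes backward
differences in `k` and in `l`, and by Pascal's rule
`(C(k+1,n+1) - C(k,n+1)) (C(l+1,n+1) - C(l,n+1)) = C(k,n) C(l,n)`, so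
`F (1 - x₁)(1 - x₂) = 1 + x₁x₂x₃ F`, i.e. `F = 1/((1-x₁)(1-x₂) - x₁x₂x₃)`. The terms of `F` with
`n = 0` sum to `1/((1-x₁)(1-x₂))`, and the remaining ones to the double binomial series.
-/

open MvPowerSeries

/-- The formal power series in variables `x₁ = X 0`, `x₂ = X 1`, `x₃ = X 2` whose
coefficient of `x₁^k x₂^l x₃^n` is `C(k,n) · C(l,n)` when `n ≥ 1`, `k ≥ n`, `l ≥ n`
and `0` otherwise; i.e. `∑_{n≥1} ∑_{k≥n} ∑_{l≥n} C(k,n) C(l,n) x₁^k x₂^l x₃^n`. -/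
noncomputable def doubleBinomialSeries : MvPowerSeries (Fin 3) ℚ :=
  fun m =>
    if 1 ≤ m 2 ∧ m 2 ≤ m 0 ∧ m 2 ≤ m 1 then
      ((m 0).choose (m 2) * (m 1).choose (m 2) : ℚ)
    else 0

namespace MvPowerSeries

variable {σ R : Type*} [CommSemiring R]

theorem coeff_mul_X_eq_ite (φ : MvPowerSeries σ R) (s : σ) (m : σ →₀ ℕ) :
    coeff m (φ * X s) = if m s = 0 then 0 else coeff (m - Finsupp.single s 1) φ := by
  simp only [X, coeff_mul_monomial, Finsupp.single_le_iff, mul_one]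
  split_ifs <;> first | rfl | omega

def trivariate (c : ℕ → ℕ → ℕ → R) : MvPowerSeries (Fin 3) R :=
  fun m => c (m 0) (m 1) (m 2)

@[simp]
theorem coeff_trivariate (c : ℕ → ℕ → ℕ → R) (m : Fin 3 →₀ ℕ) :
    coeff m (trivariate c) = c (m 0) (m 1) (m 2) := rfl

theorem trivariate_add (c d : ℕ → ℕ → ℕ → R) :
    trivariate c + trivariate d = trivariate (c + d) := rfl

theorem one_eq_trivariate :
    (1 : MvPowerSeries (Fin 3) R) =
      trivariate fun k l n => if k = 0 ∧ l = 0 ∧ n = 0 then 1 else 0 := by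
  ext m
  simp [coeff_one, Finsupp.ext_iff, Fin.forall_fin_succ]

theorem trivariate_mul_X_zero (c : ℕ → ℕ → ℕ → R) :
    trivariate c * X 0 = trivariate fun k l n => if k = 0 then 0 else c (k - 1) l n := by
  ext m
  simp [coeff_mul_X_eq_ite]

theorem trivariate_mul_X_one (c : ℕ → ℕ → ℕ → R) :
    trivariate c * X 1 = trivariate fun k l n => if l = 0 then 0 else c k (l - 1) n := by
  ext m
  simp [coeff_mul_X_eq_ite]

theorem trivariate_mul_X_two (c : ℕ → ℕ → ℕ → R) :
    trivariate c * X 2 = trivariate fun k l n => if n = 0 then 0 else c k l (n - 1) := by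
  ext m
  simp [coeff_mul_X_eq_ite]

section CommRing

variable {R : Type*} [CommRing R]

theorem trivariate_sub (c d : ℕ → ℕ → ℕ → R) :
    trivariate c - trivariate d = trivariate (c - d) := rfl

theorem trivariate_mul_one_sub_X_zero (c : ℕ → ℕ → ℕ → R) :
    trivariate c * (1 - X 0) =
      trivariate fun k l n => c k l n - if k = 0 then 0 else c (k - 1) l n := by
  rw [mul_one_sub, trivariate_mul_X_zero]
  rfl

theorem trivariate_mul_one_sub_X_one (c : ℕ → ℕ → ℕ → R) :
    trivariate c * (1 - X 1) =
      trivariate fun k l n => c k l n - if l = 0 then 0 else c k (l - 1) n := by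
  rw [mul_one_sub, trivariate_mul_X_one]
  rfl

end CommRing

end MvPowerSeries

section

variable {R : Type*} [CommRing R]

theorem sub_choose_mul_sub_choose (k l n : ℕ) :
    ((k + 1).choose (n + 1) - k.choose (n + 1) : R) * ((l + 1).choose (n + 1) - l.choose (n + 1))
      = k.choose n * l.choose n := by
  simp [Nat.choose_succ_succ']

def doubleGeometricSeries : MvPowerSeries (Fin 3) R :=
  trivariate fun _ _ n => if n = 0 then 1 else 0

def chooseMulChooseSeries : MvPowerSeries (Fin 3) R :=
  trivariate fun k l n => k.choose n * l.choose n

theorem doubleGeometricSeries_mul :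
    doubleGeometricSeries * ((1 - X 0) * (1 - X 1)) = (1 : MvPowerSeries (Fin 3) R) := by
  rw [← mul_assoc, doubleGeometricSeries, trivariate_mul_one_sub_X_zero,
    trivariate_mul_one_sub_X_one, one_eq_trivariate]
  congr 1
  funext k l n
  rcases k with _ | k <;> rcases l with _ | l <;> simp

theorem chooseMulChooseSeries_mul :
    chooseMulChooseSeries * ((1 - X 0) * (1 - X 1) - X 0 * X 1 * X 2) =
      (1 : MvPowerSeries (Fin 3) R) := by
  rw [mul_sub, ← mul_assoc, ← mul_assoc, ← mul_assoc, chooseMulChooseSeries,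
    trivariate_mul_one_sub_X_zero, trivariate_mul_one_sub_X_one, trivariate_mul_X_zero,
    trivariate_mul_X_one, trivariate_mul_X_two, one_eq_trivariate, trivariate_sub]
  congr 1
  funext k l n
  rcases k with _ | k <;> rcases l with _ | l <;> rcases n with _ | n <;> simp
  case succ.succ.succ => linear_combination sub_choose_mul_sub_choose (R := R) k l n

end

theorem doubleBinomialSeries_eq_trivariate :
    doubleBinomialSeries =
      trivariate fun k l n => if 1 ≤ n ∧ n ≤ k ∧ n ≤ l then (k.choose n * l.choose n : ℚ) else 0 :=
  rfl

theorem doubleGeometricSeries_add_doubleBinomialSeries :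
    doubleGeometricSeries + doubleBinomialSeries = chooseMulChooseSeries := by
  rw [doubleGeometricSeries, doubleBinomialSeries_eq_trivariate, trivariate_add,
    chooseMulChooseSeries]
  congr 1
  funext k l n
  rcases n with _ | n
  · simp
  · by_cases hk : n + 1 ≤ k <;> by_cases hl : n + 1 ≤ l <;>
      simp [hk, hl, Nat.choose_eq_zero_of_lt, not_le.mp]

theorem statement1 :
    ((1 - MvPowerSeries.X (0 : Fin 3)) * (1 - MvPowerSeries.X (1 : Fin 3)))⁻¹
        + doubleBinomialSeries =
      ((1 - MvPowerSeries.X (0 : Fin 3)) * (1 - MvPowerSeries.X (1 : Fin 3))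
          - MvPowerSeries.X 0 * MvPowerSeries.X 1 * MvPowerSeries.X 2)⁻¹ := by
  rw [(MvPowerSeries.inv_eq_iff_mul_eq_one (by simp)).2 doubleGeometricSeries_mul,
    doubleGeometricSeries_add_doubleBinomialSeries]
  exact (MvPowerSeries.eq_inv_iff_mul_eq_one (by simp)).2 chooseMulChooseSeries_mul
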